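/- arXiv:1112.5956 — 4 statements merged into one kernel-verified Lean document; each statement's English description precedes it below -/
import Mathlib

section
/- Under the substitution q^{s₁-s}→transformed variables with s₁=a, ξ=1, N = b-a-1 and the change of parameters q^{a-b} = q^{-N-1}, q^{a+b} = c̃/ã, the identity (q^{-s};q)_k (q^{s+2a+1};q)_k = (-1)^k q^{k(a+1+(k-1)/2)} q^{-(N+1)k} ã^{-k} q^{-k(a+1)} ∏_{i=0}^{k-1} [ μ̃(s) - c̃ q^{i+1} - ã q^{N+1-i} ] holds, where μ̃(s) = q^{N+1} ã q^{a+1} (μ(s+a) - c₃)/c₁ = q^{N+1} ã q^{-s} + c̃ q^{s+1}. -/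
/-- The symmetric `q`-number `[x]_q`. -/
noncomputable def qnum (q x : ℝ) : ℝ :=
  (q ^ (x / 2) - q ^ (-x / 2)) / (q ^ ((1 : ℝ) / 2) - q ^ (-(1 : ℝ) / 2))

/-- The non-standard `q`-Racah lattice `μ(s) = [s]_q [s+1]_q`. -/
noncomputable def qlat (q s : ℝ) : ℝ := qnum q s * qnum q (s + 1)

/-- `κ_q = q^{1/2} - q^{-1/2}`. -/
noncomputable def kq (q : ℝ) : ℝ := q ^ ((1 : ℝ) / 2) - q ^ (-(1 : ℝ) / 2)

noncomputable def c1 (q : ℝ) : ℝ := q ^ ((1 : ℝ) / 2) / (kq q) ^ 2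

noncomputable def c3 (q : ℝ) : ℝ := -q ^ (-(1 : ℝ) / 2) * (1 + q) / (kq q) ^ 2

lemma qracah_alg_aux (U w : ℝ) (hU : U ≠ 0) (hw : w ≠ 0) :
    (U - U⁻¹)/(w - w⁻¹) * ((U*w - (U*w)⁻¹)/(w - w⁻¹)) - -w⁻¹*(1+w*w)/(w-w⁻¹)^2
      = (U*U + (U*U*(w*w))⁻¹) * (w/(w-w⁻¹)^2) := by
  have hnum : (U - U⁻¹) * (U*w - (U*w)⁻¹) - -w⁻¹*(1+w*w) = (U*U + (U*U*(w*w))⁻¹) * w := by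
    field_simp
    ring
  generalize (w - w⁻¹) = κ
  calc (U - U⁻¹)/κ * ((U*w - (U*w)⁻¹)/κ) - -w⁻¹*(1+w*w)/κ^2
      = ((U - U⁻¹) * (U*w - (U*w)⁻¹) - -w⁻¹*(1+w*w))/κ^2 := by ring
    _ = ((U*U + (U*U*(w*w))⁻¹) * w)/κ^2 := by rw [hnum]
    _ = (U*U + (U*U*(w*w))⁻¹) * (w/κ^2) := by ring

lemma qracah_key_div (q t : ℝ) (hq0 : 0 < q) (hq1 : q < 1) :
    (qlat q t - c3 q) / c1 q = q ^ t + q ^ (-(t + 1)) := by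
  have hmul : ∀ x y : ℝ, q ^ (x + y) = q ^ x * q ^ y := fun x y => Real.rpow_add hq0 x y
  have hneg : ∀ x : ℝ, q ^ (-x) = (q ^ x)⁻¹ := fun x => Real.rpow_neg hq0.le x
  have hu0 : q ^ (t/2) ≠ 0 := (Real.rpow_pos_of_pos hq0 _).ne'
  have hw0 : q ^ ((1:ℝ)/2) ≠ 0 := (Real.rpow_pos_of_pos hq0 _).ne'
  have hw1 : q ^ ((1:ℝ)/2) < 1 := Real.rpow_lt_one hq0.le hq1 (by norm_num)
  have hwpos : (0:ℝ) < q ^ ((1:ℝ)/2) := Real.rpow_pos_of_pos hq0 _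
  have e5 : q ^ (-(1:ℝ)/2) = (q ^ ((1:ℝ)/2))⁻¹ := by
    rw [show -(1:ℝ)/2 = -((1:ℝ)/2) by ring, hneg]
  have hk : kq q ≠ 0 := by
    have h1 : (q ^ ((1:ℝ)/2))⁻¹ > 1 := (one_lt_inv₀ hwpos).2 hw1
    simp only [kq, e5]
    nlinarith
  have hc1 : c1 q ≠ 0 := by
    simp only [c1]
    exact div_ne_zero hw0 (pow_ne_zero 2 hk)
  have hnum : qlat q t - c3 q = (q ^ t + q ^ (-(t + 1))) * c1 q := by
    simp only [qlat, qnum, kq, c1, c3]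
    have e1 : q ^ (-t/2) = (q ^ (t/2))⁻¹ := by
      rw [show -t/2 = -(t/2) by ring, hneg]
    have e2 : q ^ ((t+1)/2) = q ^ (t/2) * q ^ ((1:ℝ)/2) := by
      rw [show (t+1)/2 = t/2 + (1:ℝ)/2 by ring, hmul]
    have e3 : q ^ (-(t+1)/2) = (q ^ (t/2) * q ^ ((1:ℝ)/2))⁻¹ := by
      rw [show -(t+1)/2 = -(t/2 + (1:ℝ)/2) by ring, hneg, hmul]
    have e4 : q ^ t = q ^ (t/2) * q ^ (t/2) := by
      nth_rewrite 1 [show t = t/2 + t/2 by ring]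
      rw [hmul]
    have e6 : (1:ℝ) + q = 1 + q ^ ((1:ℝ)/2) * q ^ ((1:ℝ)/2) := by
      rw [← hmul]; norm_num
    have e7 : q ^ (-(t+1)) = (q ^ (t/2) * q ^ (t/2) * (q ^ ((1:ℝ)/2) * q ^ ((1:ℝ)/2)))⁻¹ := by
      rw [hneg, show t + 1 = t/2 + t/2 + ((1:ℝ)/2 + (1:ℝ)/2) by ring, hmul, hmul, hmul]
    rw [e5, e1, e2, e3, e4, e6, e7]
    exact qracah_alg_aux _ _ hu0 hw0
  rw [hnum, mul_div_assoc, div_self hc1, mul_one]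

lemma qracah_part1 (q a s atilde ctilde : ℝ) (N : ℕ)
    (hq0 : 0 < q) (hq1 : q < 1) (hatilde : atilde ≠ 0)
    (h2a : q ^ (2 * a) = ctilde / (atilde * q ^ ((N : ℝ) + 1))) :
    q ^ ((N : ℝ) + 1) * atilde * q ^ (a + 1) * ((qlat q (s + a) - c3 q) / c1 q) =
      q ^ ((N : ℝ) + 1) * atilde * q ^ (-s) + ctilde * q ^ (s + 1) := by
  have hW : (0:ℝ) < q ^ ((N : ℝ) + 1) := Real.rpow_pos_of_pos hq0 _
  have hc : ctilde = atilde * q ^ ((N : ℝ) + 1) * q ^ (2 * a) := by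
    field_simp at h2a
    linarith [h2a]
  have hmul : ∀ x y : ℝ, q ^ (x + y) = q ^ x * q ^ y := fun x y => Real.rpow_add hq0 x y
  have hneg : ∀ x : ℝ, q ^ (-x) = (q ^ x)⁻¹ := fun x => Real.rpow_neg hq0.le x
  have hS0 : q ^ s ≠ 0 := (Real.rpow_pos_of_pos hq0 _).ne'
  have hA0 : q ^ a ≠ 0 := (Real.rpow_pos_of_pos hq0 _).ne'
  have hq0' : q ≠ 0 := hq0.ne'
  rw [qracah_key_div q (s + a) hq0 hq1, hc]
  have e1 : q ^ (s + a) = q ^ s * q ^ a := hmul s a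
  have e2 : q ^ (-(s + a + 1)) = (q ^ s * q ^ a * q ^ (1:ℝ))⁻¹ := by
    rw [hneg, hmul, hmul]
  have e3 : q ^ (a + 1) = q ^ a * q ^ (1:ℝ) := hmul a 1
  have e4 : q ^ (2 * a) = q ^ a * q ^ a := by
    rw [show 2 * a = a + a by ring, hmul]
  have e5 : q ^ (-s) = (q ^ s)⁻¹ := hneg s
  have e6 : q ^ (s + 1) = q ^ s * q ^ (1:ℝ) := hmul s 1
  have e7 : q ^ (1:ℝ) = q := Real.rpow_one q
  rw [e1, e2, e3, e4, e5, e6, e7]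
  field_simp
  ring

lemma qracah_prod_rpow (q : ℝ) (hq : 0 < q) (k : ℕ) (f : ℕ → ℝ) :
    ∏ i ∈ Finset.range k, q ^ (f i) = q ^ (∑ i ∈ Finset.range k, f i) := by
  induction k with
  | zero => simp
  | succ n ih => rw [Finset.prod_range_succ, Finset.sum_range_succ, ih, ← Real.rpow_add hq]

lemma qracah_sum_aux (N k : ℕ) :
    ∑ i ∈ Finset.range k, ((N:ℝ) + 1 - (i:ℝ))
      = (k:ℝ) * ((N:ℝ) + 1) - (k:ℝ) * ((k:ℝ) - 1) / 2 := by
  induction k with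
  | zero => simp
  | succ n ih =>
    rw [Finset.sum_range_succ, ih]
    push_cast
    ring

theorem qracah_to_bigqjacobi_substitution (q a s atilde ctilde : ℝ) (N : ℕ) (k : ℕ)
    (hq0 : 0 < q) (hq1 : q < 1) (hatilde : atilde ≠ 0)
    (h2a : q ^ (2 * a) = ctilde / (atilde * q ^ ((N : ℝ) + 1))) :
    q ^ ((N : ℝ) + 1) * atilde * q ^ (a + 1) * ((qlat q (s + a) - c3 q) / c1 q) =
      q ^ ((N : ℝ) + 1) * atilde * q ^ (-s) + ctilde * q ^ (s + 1) ∧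
    (∏ j ∈ Finset.range k, (1 - q ^ (-s) * q ^ j)) *
        (∏ j ∈ Finset.range k, (1 - q ^ (s + 2 * a + 1) * q ^ j)) =
      (-1) ^ k * q ^ ((k : ℝ) * (a + 1 + ((k : ℝ) - 1) / 2)) *
        q ^ (-((N : ℝ) + 1) * (k : ℝ)) * atilde⁻¹ ^ k * q ^ (-(k : ℝ) * (a + 1)) *
        ∏ i ∈ Finset.range k,
          (q ^ ((N : ℝ) + 1) * atilde * q ^ (a + 1) * ((qlat q (s + a) - c3 q) / c1 q) -
            ctilde * q ^ ((i : ℝ) + 1) - atilde * q ^ ((N : ℝ) + 1 - (i : ℝ))) := by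
  have h1 := qracah_part1 q a s atilde ctilde N hq0 hq1 hatilde h2a
  refine ⟨h1, ?_⟩
  have hW : (0:ℝ) < q ^ ((N : ℝ) + 1) := Real.rpow_pos_of_pos hq0 _
  have hc : ctilde = atilde * q ^ ((N : ℝ) + 1) * q ^ (2 * a) := by
    field_simp at h2a
    linarith [h2a]
  have hmul : ∀ x y : ℝ, q ^ (x + y) = q ^ x * q ^ y := fun x y => Real.rpow_add hq0 x y
  have hneg : ∀ x : ℝ, q ^ (-x) = (q ^ x)⁻¹ := fun x => Real.rpow_neg hq0.le x
  have hS0 : q ^ s ≠ 0 := (Real.rpow_pos_of_pos hq0 _).ne'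
  have hq0' : q ≠ 0 := hq0.ne'
  simp only [h1]
  have hfac : ∀ i ∈ Finset.range k,
      q ^ ((N : ℝ) + 1) * atilde * q ^ (-s) + ctilde * q ^ (s + 1) -
          ctilde * q ^ ((i : ℝ) + 1) - atilde * q ^ ((N : ℝ) + 1 - (i : ℝ))
        = (-atilde) * q ^ ((N : ℝ) + 1 - (i : ℝ)) *
            ((1 - q ^ (-s) * q ^ i) * (1 - q ^ (s + 2 * a + 1) * q ^ i)) := by
    intro i _
    have hZ0 : q ^ ((i:ℝ)) ≠ 0 := (Real.rpow_pos_of_pos hq0 _).ne'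
    have f1 : (q:ℝ) ^ (i:ℕ) = q ^ ((i:ℝ)) := (Real.rpow_natCast q i).symm
    have f2 : q ^ ((i:ℝ) + 1) = q ^ ((i:ℝ)) * q := by
      rw [hmul, Real.rpow_one]
    have f3 : q ^ ((N:ℝ) + 1 - (i:ℝ)) = q ^ ((N:ℝ) + 1) * (q ^ ((i:ℝ)))⁻¹ := by
      rw [show (N:ℝ) + 1 - (i:ℝ) = ((N:ℝ) + 1) + (-(i:ℝ)) by ring, hmul, hneg]
    have f4 : q ^ (-s) = (q ^ s)⁻¹ := hneg s
    have f5 : q ^ (s + 1) = q ^ s * q := by rw [hmul, Real.rpow_one]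
    have f6 : q ^ (s + 2 * a + 1) = q ^ s * q ^ (2 * a) * q := by
      rw [show s + 2 * a + 1 = s + 2 * a + 1 by ring, hmul, hmul, Real.rpow_one]
    rw [hc, f1, f2, f3, f4, f5, f6]
    field_simp
    ring
  rw [Finset.prod_congr rfl hfac]
  simp only [Finset.prod_mul_distrib, Finset.prod_const, Finset.card_range]
  rw [qracah_prod_rpow q hq0 k (fun i => (N:ℝ) + 1 - (i:ℝ)), qracah_sum_aux N k]
  have hpow : q ^ ((k : ℝ) * (a + 1 + ((k : ℝ) - 1) / 2)) * q ^ (-((N : ℝ) + 1) * (k : ℝ)) *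
      q ^ (-(k : ℝ) * (a + 1)) *
      q ^ ((k:ℝ) * ((N:ℝ) + 1) - (k:ℝ) * ((k:ℝ) - 1) / 2) = 1 := by
    rw [← Real.rpow_add hq0, ← Real.rpow_add hq0, ← Real.rpow_add hq0,
      show (k : ℝ) * (a + 1 + ((k : ℝ) - 1) / 2) + -((N : ℝ) + 1) * (k : ℝ) +
        -(k : ℝ) * (a + 1) + ((k:ℝ) * ((N:ℝ) + 1) - (k:ℝ) * ((k:ℝ) - 1) / 2) = 0 by ring,
      Real.rpow_zero]
  have heven : (-1 : ℝ) ^ k * (-1 : ℝ) ^ k = 1 := by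
    rw [← mul_pow]; norm_num
  have hatinv : atilde⁻¹ ^ k * atilde ^ k = 1 := by
    rw [← mul_pow, inv_mul_cancel₀ hatilde, one_pow]
  have hnp : (-atilde) ^ k = (-1 : ℝ) ^ k * atilde ^ k := by
    rw [neg_pow]
  set P := (∏ j ∈ Finset.range k, (1 - q ^ (-s) * q ^ j)) *
      (∏ j ∈ Finset.range k, (1 - q ^ (s + 2 * a + 1) * q ^ j)) with hP
  set X := atilde⁻¹ ^ k * atilde ^ k with hX
  set Y := q ^ ((k : ℝ) * (a + 1 + ((k : ℝ) - 1) / 2)) * q ^ (-((N : ℝ) + 1) * (k : ℝ)) *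
      q ^ (-(k : ℝ) * (a + 1)) *
      q ^ ((k:ℝ) * ((N:ℝ) + 1) - (k:ℝ) * ((k:ℝ) - 1) / 2) with hY
  linear_combination (-((-1 : ℝ) ^ k * Y * atilde⁻¹ ^ k * P)) * hnp -
    (X * Y * P) * heven - (Y * P) * hatinv - P * hpow
end

section
/- With q^β = γ, q^{2a} = γδ, b = a+N+1 and C_n = (γδq)^{n/2}κ_q^{2n}, the limit as q^α → 0 of q^{a+1} c₁^{-1}(C_n/C_{n-1}) γ_n equals γq(1-q^n)(δ - q^{n-N-1})(1 - q^{n-N-1})(1 - γq^n), the recurrence coefficient γ̃_n of the monic dual q-Hahn polynomials. -/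
open Filter

/-- The coefficient `γ_n` of the three-term recurrence of the non-standard `q`-Racah
polynomials, with real parameters `a`, `b`, `α`, `β`. -/
noncomputable def qRacahGammaR (q a b α β : ℝ) (n : ℕ) : ℝ :=
  qnum q n * qnum q (α + β + n) * qnum q (α + n) * qnum q (β + n) *
    qnum q (b - a + α + β + n) * qnum q (-a - b + β + n) *
    qnum q (a - b + n) * qnum q (a + b + α + n) /
    (qnum q (α + β + 2 * n - 1) * (qnum q (α + β + 2 * n)) ^ 2 * qnum q (α + β + 2 * n + 1))

/-!
Write `[x]_q = q^{-x/2} (q^x - 1) / κ_q`. The eight arguments in the numerator of `γ_n` have the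
same sum as the four in its denominator, so the factors `q^{-x/2}` cancel and `γ_n` is `κ_q^{-4}`
times a rational function of `s = q^α` that is regular at `s = 0`. As `s → 0` every factor
involving `α` tends to `-1`; the four surviving factors, times the prefactor `γδq κ_q⁴`, give
`γ̃_n`.
-/

open Real Topology

section

variable {q : ℝ}

lemma rpow_half_sub_rpow_neg_half (hq : 0 < q) (x : ℝ) :
    q ^ (x / 2) - q ^ (-x / 2) = q ^ (-x / 2) * (q ^ x - 1) := by
  rw [mul_sub, mul_one, ← rpow_add hq]
  ring_nf

lemma kq_ne_zero (hq0 : 0 < q) (hq1 : q ≠ 1) : kq q ≠ 0 := by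
  have h := rpow_half_sub_rpow_neg_half hq0 1
  rw [rpow_one] at h
  rw [kq, h]
  exact mul_ne_zero (rpow_pos_of_pos hq0 _).ne' (sub_ne_zero.mpr hq1)

lemma qnum_eq_rpow_neg_half_mul (hq : 0 < q) (x : ℝ) :
    qnum q x = q ^ (-x / 2) * (q ^ x - 1) / kq q := by
  rw [qnum, rpow_half_sub_rpow_neg_half hq, kq]

lemma prod_map_qnum (hq : 0 < q) (xs : List ℝ) :
    (xs.map (qnum q)).prod =
      q ^ (-xs.sum / 2) * (xs.map (fun x => q ^ x - 1)).prod / kq q ^ xs.length := by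
  induction xs with
  | nil => simp
  | cons x xs ih =>
    simp only [List.map_cons, List.prod_cons, List.sum_cons, List.length_cons, ih,
      qnum_eq_rpow_neg_half_mul hq, neg_add, add_div, rpow_add hq]
    ring

lemma prod_map_qnum_div_prod_map_qnum (hq : 0 < q) {xs ys : List ℝ} (h : xs.sum = ys.sum) :
    (xs.map (qnum q)).prod / (ys.map (qnum q)).prod =
      kq q ^ ys.length / kq q ^ xs.length *
        ((xs.map (fun x => q ^ x - 1)).prod / (ys.map (fun y => q ^ y - 1)).prod) := by
  have hE : q ^ (-ys.sum / 2) ≠ 0 := (rpow_pos_of_pos hq _).ne'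
  rw [prod_map_qnum hq, prod_map_qnum hq, h, mul_div_assoc _ (List.prod _),
    mul_div_assoc _ (List.prod _), mul_div_mul_left _ _ hE]
  simp only [div_eq_mul_inv, mul_inv, inv_inv]
  ring

/-- `γ_n` as a rational function of `s = q^α`. -/
noncomputable def qRacahGammaRat (q a b β : ℝ) (n : ℕ) (s : ℝ) : ℝ :=
  (q ^ (n : ℝ) - 1) * (s * q ^ (β + n) - 1) * (s * q ^ (n : ℝ) - 1) * (q ^ (β + n) - 1) *
      (s * q ^ (b - a + β + n) - 1) * (q ^ (-a - b + β + n) - 1) * (q ^ (a - b + n) - 1) *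
      (s * q ^ (a + b + n) - 1) /
    ((s * q ^ (β + 2 * n - 1) - 1) * (s * q ^ (β + 2 * n) - 1) ^ 2 *
      (s * q ^ (β + 2 * n + 1) - 1)) / kq q ^ 4

lemma qRacahGammaR_eq_qRacahGammaRat (hq : 0 < q) (a b α β : ℝ) (n : ℕ) :
    qRacahGammaR q a b α β n = qRacahGammaRat q a b β n (q ^ α) := by
  have h := prod_map_qnum_div_prod_map_qnum hq
    (xs := [n, α + β + n, α + n, β + n, b - a + α + β + n, -a - b + β + n, a - b + n,
      a + b + α + n])
    (ys := [α + β + 2 * n - 1, α + β + 2 * n, α + β + 2 * n, α + β + 2 * n + 1])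
    (by simp only [List.sum_cons, List.sum_nil]; ring)
  simp only [List.map_cons, List.map_nil, List.prod_cons, List.prod_nil, List.length_cons,
    List.length_nil, zero_add, Nat.reduceAdd] at h
  rw [show 8 = 4 + 4 from rfl, pow_add, div_self_mul_self'] at h
  rw [qRacahGammaR, qRacahGammaRat]
  convert h using 1
  · ring
  · rw [rpow_sub hq (α + β + 2 * n), rpow_sub hq (β + 2 * n)]
    simp only [rpow_add hq]
    ring

lemma tendsto_qRacahGammaR_logb (hq0 : 0 < q) (hq1 : q ≠ 1) (a b β : ℝ) (n : ℕ) :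
    Tendsto (fun t => qRacahGammaR q a b (logb q t) β n) (𝓝[>] 0)
      (𝓝 ((q ^ (n : ℝ) - 1) * (q ^ (β + n) - 1) * (q ^ (-a - b + β + n) - 1) *
        (q ^ (a - b + n) - 1) / kq q ^ 4)) := by
  have hcont : ContinuousAt (qRacahGammaRat q a b β n) 0 :=
    ((ContinuousAt.div (by fun_prop) (by fun_prop) (by norm_num)).div continuousAt_const
      (pow_ne_zero 4 (kq_ne_zero hq0 hq1)))
  have hval : qRacahGammaRat q a b β n 0 = (q ^ (n : ℝ) - 1) * (q ^ (β + n) - 1) *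
      (q ^ (-a - b + β + n) - 1) * (q ^ (a - b + n) - 1) / kq q ^ 4 := by
    simp only [qRacahGammaRat, zero_mul, zero_sub]
    ring
  rw [← hval]
  refine (hcont.tendsto.mono_left nhdsWithin_le_nhds).congr' ?_
  filter_upwards [self_mem_nhdsWithin] with t ht
  rw [qRacahGammaR_eq_qRacahGammaRat hq0, rpow_logb hq0 hq1 ht]

lemma rpow_logb_half_add_one_div_c1_mul (hq0 : 0 < q) (hq1 : q ≠ 1) {c : ℝ} (hc : 0 < c) :
    q ^ (logb q c / 2 + 1) / c1 q * ((c * q) ^ ((1 : ℝ) / 2) * kq q ^ 2) = c * q * kq q ^ 4 := by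
  have hsqrt : q ^ (logb q c / 2) = c ^ ((1 : ℝ) / 2) := by
    rw [div_eq_mul_one_div, rpow_mul hq0.le, rpow_logb hq0 hq1 hc]
  have hc2 : c ^ ((1 : ℝ) / 2) * c ^ ((1 : ℝ) / 2) = c := by
    rw [← rpow_add hc]; norm_num
  have hs : q ^ ((1 : ℝ) / 2) ≠ 0 := (rpow_pos_of_pos hq0 _).ne'
  rw [rpow_add hq0, hsqrt, mul_rpow hc.le hq0.le, rpow_one, c1]
  field_simp
  linear_combination kq q ^ 4 * hc2

end

theorem qracah_gamma_to_dualqhahn_gamma_general (q γ δ : ℝ) (hq0 : 0 < q) (hq1 : q < 1)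
    (hγ0 : 0 < γ * q) (hδ0 : 0 < δ * q) (N n : ℕ) :
    Tendsto (fun t : ℝ =>
        q ^ (Real.logb q (γ * δ) / 2 + 1) / c1 q *
          -- the ratio `C_n / C_{n-1} = (γδq)^{1/2} κ_q²`
          ((γ * δ * q) ^ ((1 : ℝ) / 2) * (kq q) ^ 2) *
          qRacahGammaR q (Real.logb q (γ * δ) / 2) (Real.logb q (γ * δ) / 2 + N + 1)
            (Real.logb q t) (Real.logb q γ) n)
      (nhdsWithin 0 (Set.Ioi 0))
      (nhds (γ * q * (1 - q ^ n) * (δ - q ^ ((n : ℝ) - N - 1)) * (1 - q ^ ((n : ℝ) - N - 1)) *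
        (1 - γ * q ^ n))) := by
  have hγ : 0 < γ := pos_of_mul_pos_left hγ0 hq0.le
  have hδ : 0 < δ := pos_of_mul_pos_left hδ0 hq0.le
  rw [rpow_logb_half_add_one_div_c1_mul hq0 hq1.ne (mul_pos hγ hδ)]
  convert (tendsto_qRacahGammaR_logb hq0 hq1.ne _ _ (logb q γ) n).const_mul
    (γ * δ * q * kq q ^ 4) using 2
  have hexp : -(logb q (γ * δ) / 2) - (logb q (γ * δ) / 2 + N + 1) + logb q γ + n =
      (n - N - 1) - logb q δ := by
    rw [logb_mul hγ.ne' hδ.ne']; ring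
  rw [hexp, rpow_sub hq0 _ (logb q δ), rpow_add hq0 (logb q γ), rpow_logb hq0 hq1.ne hγ,
    rpow_logb hq0 hq1.ne hδ,
    show logb q (γ * δ) / 2 - (logb q (γ * δ) / 2 + N + 1) + n = (n : ℝ) - N - 1 by ring,
    rpow_natCast]
  field_simp [kq_ne_zero hq0 hq1.ne]
  ring

theorem qracah_gamma_to_dualqhahn_gamma (q γ δ : ℝ) (hq0 : 0 < q) (hq1 : q < 1)
    (hγ0 : 0 < γ * q) (hγ1 : γ * q < 1) (hδ0 : 0 < δ * q) (hδ1 : δ * q < 1)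
    (N n : ℕ) (hn1 : 1 ≤ n) (hnN : n ≤ N) :
    Tendsto (fun t : ℝ =>
        q ^ (Real.logb q (γ * δ) / 2 + 1) / c1 q *
          -- the ratio `C_n / C_{n-1} = (γδq)^{1/2} κ_q²`
          ((γ * δ * q) ^ ((1 : ℝ) / 2) * (kq q) ^ 2) *
          qRacahGammaR q (Real.logb q (γ * δ) / 2) (Real.logb q (γ * δ) / 2 + N + 1)
            (Real.logb q t) (Real.logb q γ) n)
      (nhdsWithin 0 (Set.Ioi 0))
      (nhds (γ * q * (1 - q ^ n) * (δ - q ^ ((n : ℝ) - N - 1)) * (1 - q ^ ((n : ℝ) - N - 1)) *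
        (1 - γ * q ^ n))) :=
  qracah_gamma_to_dualqhahn_gamma_general q γ δ hq0 hq1 hγ0 hδ0 N n
end

section
/- Let u be a quasi-definite functional with monic orthogonal polynomials (u_n), norms d_n², and kernels K_n. Let ũ = u + A δ_a + B δ_b be the Krall-type modification. If the modified monic orthogonal polynomials ũ_n exist, then ũ_n(x) = u_n(x) − A ũ_n(a) K_{n-1}(x,a) − B ũ_n(b) K_{n-1}(x,b), and the values ũ_n(a), ũ_n(b) are given by solving the 2×2 linear system: ũ_n(a) = [(1 + B K_{n-1}(b,b)) u_n(a) − B K_{n-1}(a,b) u_n(b)]/κ_{n-1}, ũ_n(b) = [−A K_{n-1}(b,a) u_n(a) + (1 + A K_{n-1}(a,a)) u_n(b)]/κ_{n-1}, where κ_{n-1} = 1 + A K_{n-1}(a,a) + B K_{n-1}(b,b) + AB(K_{n-1}(a,a)K_{n-1}(b,b) − K_{n-1}(a,b)²), provided κ_{n-1} ≠ 0. -/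
open Polynomial

lemma expand_aux (un : ℕ → ℝ[X]) (hmonic : ∀ n, (un n).Monic)
    (hdeg : ∀ n, (un n).natDegree = n) :
    ∀ N : ℕ, ∀ p : ℝ[X], p.degree < (N : WithBot ℕ) →
      ∃ c : ℕ → ℝ, p = ∑ k ∈ Finset.range N, c k • un k := by
  intro N
  induction N with
  | zero =>
    intro p hp
    refine ⟨0, ?_⟩
    have : p = 0 := Polynomial.degree_eq_bot.mp (Nat.WithBot.lt_zero_iff.mp (by exact_mod_cast hp))
    simp [this]
  | succ N ih =>
    intro p hp
    have hdun : (un N).degree = (N : WithBot ℕ) := by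
      rw [Polynomial.degree_eq_natDegree (hmonic N).ne_zero, hdeg N]
    set q := p - p.coeff N • un N with hq
    have hqdeg : q.degree < (N : WithBot ℕ) := by
      rw [Polynomial.degree_lt_iff_coeff_zero]
      intro m hm
      rcases eq_or_lt_of_le hm with h | h
      · have hmN : m = N := by exact_mod_cast h.symm
        have hcN : (un N).coeff N = 1 := by
          have := (hmonic N).coeff_natDegree
          rwa [hdeg N] at this
        rw [hq, hmN]
        simp [hcN]
      · have hNm : N < m := by exact_mod_cast h
        have h1 : p.coeff m = 0 := by
          refine Polynomial.coeff_eq_zero_of_degree_lt (lt_of_lt_of_le hp ?_)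
          exact_mod_cast hNm
        have h2 : (un N).coeff m = 0 := by
          refine Polynomial.coeff_eq_zero_of_degree_lt ?_
          rw [hdun]; exact_mod_cast hNm
        simp [hq, h1, h2]
    obtain ⟨c, hc⟩ := ih q hqdeg
    refine ⟨fun k => if k = N then p.coeff N else c k, ?_⟩
    rw [Finset.sum_range_succ]
    have h3 : ∑ k ∈ Finset.range N, (if k = N then p.coeff N else c k) • un k
        = ∑ k ∈ Finset.range N, c k • un k := by
      refine Finset.sum_congr rfl fun k hk => ?_
      rw [if_neg (Finset.mem_range.mp hk).ne]
    rw [h3, ← hc]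
    have h5 : (fun k => if k = N then p.coeff N else c k) N • un N = p.coeff N • un N := by
      simp
    rw [h5, hq]; ring

/-- The kernel `K_m(x,y) = Σ_{k=0}^m u_k(x) u_k(y) / d_k²`. -/
noncomputable def Kker (un : ℕ → ℝ[X]) (d : ℕ → ℝ) (m : ℕ) (x y : ℝ) : ℝ :=
  ∑ k ∈ Finset.range (m + 1), (un k).eval x * (un k).eval y / d k

theorem krall_representation_and_values
    (u : ℝ[X] →ₗ[ℝ] ℝ) (un : ℕ → ℝ[X]) (d : ℕ → ℝ)
    (hmonic : ∀ n, (un n).Monic) (hdeg : ∀ n, (un n).natDegree = n)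
    (hd : ∀ n, d n ≠ 0)
    (horth : ∀ n m, u (un n * un m) = if n = m then d n else 0)
    (A B a b : ℝ) (hab : a ≠ b)
    (utn : ℕ → ℝ[X])
    (htmonic : ∀ n, (utn n).Monic) (htdeg : ∀ n, (utn n).natDegree = n)
    -- orthogonality of `ũ_n` with respect to `ũ = u + A δ_a + B δ_b`
    (htorth : ∀ n : ℕ, ∀ p : ℝ[X], p.degree < (n : WithBot ℕ) →
      u (utn n * p) + A * (utn n).eval a * p.eval a + B * (utn n).eval b * p.eval b = 0)
    (n : ℕ) (hn : 1 ≤ n)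
    (hκ : 1 + A * Kker un d (n - 1) a a + B * Kker un d (n - 1) b b +
        A * B * (Kker un d (n - 1) a a * Kker un d (n - 1) b b -
          (Kker un d (n - 1) a b) ^ 2) ≠ 0) :
    (∀ x : ℝ, (utn n).eval x = (un n).eval x -
        A * (utn n).eval a * Kker un d (n - 1) x a -
        B * (utn n).eval b * Kker un d (n - 1) x b) ∧
    (utn n).eval a =
      ((1 + B * Kker un d (n - 1) b b) * (un n).eval a -
        B * Kker un d (n - 1) a b * (un n).eval b) /
      (1 + A * Kker un d (n - 1) a a + B * Kker un d (n - 1) b b +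
        A * B * (Kker un d (n - 1) a a * Kker un d (n - 1) b b -
          (Kker un d (n - 1) a b) ^ 2)) ∧
    (utn n).eval b =
      (-(A * Kker un d (n - 1) b a) * (un n).eval a +
        (1 + A * Kker un d (n - 1) a a) * (un n).eval b) /
      (1 + A * Kker un d (n - 1) a a + B * Kker un d (n - 1) b b +
        A * B * (Kker un d (n - 1) a a * Kker un d (n - 1) b b -
          (Kker un d (n - 1) a b) ^ 2)) := by
  have hm : n - 1 + 1 = n := Nat.succ_pred_eq_of_pos hn
  -- the difference has degree < n
  have hdlt : (utn n - un n).degree < (n : WithBot ℕ) := by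
    have hdd : (utn n).degree = (un n).degree := by
      rw [Polynomial.degree_eq_natDegree (htmonic n).ne_zero,
          Polynomial.degree_eq_natDegree (hmonic n).ne_zero, htdeg n, hdeg n]
    have hlc : (utn n).leadingCoeff = (un n).leadingCoeff := by
      rw [(htmonic n).leadingCoeff, (hmonic n).leadingCoeff]
    have h := Polynomial.degree_sub_lt hdd (htmonic n).ne_zero hlc
    calc (utn n - un n).degree < (utn n).degree := h
      _ = (n : WithBot ℕ) := by
        rw [Polynomial.degree_eq_natDegree (htmonic n).ne_zero, htdeg n]
  obtain ⟨c, hc⟩ := expand_aux un hmonic hdeg n (utn n - un n) hdlt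
  -- compute coefficients
  have hcj : ∀ j ∈ Finset.range n, c j * d j =
      -(A * (utn n).eval a * (un j).eval a) - B * (utn n).eval b * (un j).eval b := by
    intro j hj
    replace hj := Finset.mem_range.mp hj
    have hdegj : (un j).degree < (n : WithBot ℕ) := by
      rw [Polynomial.degree_eq_natDegree (hmonic j).ne_zero, hdeg j]
      exact_mod_cast hj
    have h1 := htorth n (un j) hdegj
    have h2 : u ((utn n - un n) * un j) = c j * d j := by
      rw [hc, Finset.sum_mul, map_sum]
      have h4 : ∀ k ∈ Finset.range n, u ((c k • un k) * un j)
          = if k = j then c k * d k else 0 := by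
        intro k hk
        rw [smul_mul_assoc, map_smul, horth k j, smul_eq_mul]
        split <;> simp
      rw [Finset.sum_congr rfl h4, Finset.sum_ite_eq' (Finset.range n) j
        (fun k => c k * d k), if_pos (Finset.mem_range.mpr hj)]
    have h3 : u (un n * un j) = 0 := by
      rw [horth n j, if_neg hj.ne']
    rw [sub_mul, map_sub, h3, sub_zero] at h2
    linarith
  -- representation
  have hrep : ∀ x : ℝ, (utn n).eval x = (un n).eval x -
      A * (utn n).eval a * Kker un d (n - 1) x a -
      B * (utn n).eval b * Kker un d (n - 1) x b := by
    intro x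
    have he : (utn n).eval x = (un n).eval x + ∑ k ∈ Finset.range n, c k * (un k).eval x := by
      have := congrArg (Polynomial.eval x) hc
      simp only [Polynomial.eval_sub, Polynomial.eval_finset_sum, Polynomial.eval_smul,
        smul_eq_mul] at this
      linarith
    rw [he]
    unfold Kker
    rw [hm, Finset.mul_sum, Finset.mul_sum]
    have hsum : ∀ k ∈ Finset.range n, c k * (un k).eval x =
        -(A * (utn n).eval a * ((un k).eval x * (un k).eval a / d k)) -
          B * (utn n).eval b * ((un k).eval x * (un k).eval b / d k) := by
      intro k hk
      have h := hcj k hk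
      have hck : c k = (-(A * (utn n).eval a * (un k).eval a) -
          B * (utn n).eval b * (un k).eval b) / d k := by
        rw [eq_div_iff (hd k)]; linarith
      rw [hck]; ring
    rw [Finset.sum_congr rfl hsum, Finset.sum_sub_distrib, Finset.sum_neg_distrib]
    ring
  have hKsym : Kker un d (n - 1) b a = Kker un d (n - 1) a b := by
    unfold Kker
    exact Finset.sum_congr rfl fun k _ => by ring
  have E1 := hrep a
  have E2 := hrep b
  rw [hKsym] at E2
  refine ⟨hrep, ?_, ?_⟩
  · rw [eq_div_iff hκ]
    linear_combination (1 + B * Kker un d (n - 1) b b) * E1 -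
      B * Kker un d (n - 1) a b * E2
  · rw [eq_div_iff hκ, hKsym]
    linear_combination (-(A * Kker un d (n - 1) a b)) * E1 +
      (1 + A * Kker un d (n - 1) a a) * E2
end

section
/- With notation as above, the squared norm of the Krall-type modified monic orthogonal polynomial satisfies (d̃_n)² := ⟨ũ, ũ_n²⟩ = d_n² + [A ũ_n(a) u_n(a) + B ũ_n(b) u_n(b)], equivalently (d̃_n)² = d_n²(1 + Δ_n) where Δ_n = (A ũ_n(a)u_n(a) + B ũ_n(b)u_n(b))/d_n²; consequently, if both (u_n) and (ũ_n) exist, the TTRR coefficient of ũ satisfies γ̃_n = γ_n (1 + Δ_n)/(1 + Δ_{n-1}). -/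
open Polynomial

private lemma ortho_lower_aux (L : ℝ[X] →ₗ[ℝ] ℝ) (p : ℕ → ℝ[X])
    (hm : ∀ n, (p n).Monic) (hdeg : ∀ n, (p n).natDegree = n)
    (horth : ∀ n m, n ≠ m → L (p n * p m) = 0) :
    ∀ (k n : ℕ) (q : ℝ[X]), q.natDegree ≤ k → q.degree < (n : ℕ) → L (p n * q) = 0 := by
  intro k
  induction k with
  | zero =>
    intro n q hk hq
    by_cases h0 : q = 0
    · simp [h0]
    · have hq0 : q.natDegree = 0 := le_antisymm hk (Nat.zero_le _)
      have hC : q = C (q.coeff 0) := Polynomial.eq_C_of_natDegree_eq_zero hq0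
      have hp0 : p 0 = 1 := (hm 0).natDegree_eq_zero.mp (hdeg 0)
      have hn : n ≠ 0 := by
        intro h; subst h
        rw [Polynomial.degree_eq_natDegree h0, hq0] at hq
        simp at hq
      have : p n * q = (q.coeff 0) • (p n * p 0) := by
        rw [hp0, smul_eq_C_mul]; nth_rewrite 1 [hC]; ring
      rw [this, map_smul, horth n 0 hn, smul_zero]
  | succ k ih =>
    intro n q hk hq
    by_cases h0 : q = 0
    · simp [h0]
    by_cases hk' : q.natDegree ≤ k
    · exact ih n q hk' hq
    have hqd : q.natDegree = k + 1 := le_antisymm hk (by omega)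
    set m := q.natDegree with hm'
    set c := q.leadingCoeff with hc
    have hc0 : c ≠ 0 := Polynomial.leadingCoeff_ne_zero.mpr h0
    have hqdeg : q.degree = (m : ℕ) := Polynomial.degree_eq_natDegree h0
    have hdegpm : (C c * p m).degree = q.degree := by
      rw [Polynomial.degree_C_mul hc0, Polynomial.degree_eq_natDegree (hm m).ne_zero,
        hdeg m, hqdeg]
    have hlc : q.leadingCoeff = (C c * p m).leadingCoeff := by
      rw [Polynomial.leadingCoeff_mul, Polynomial.leadingCoeff_C, (hm m).leadingCoeff, mul_one]
    have hrdeg : (q - C c * p m).degree < q.degree :=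
      Polynomial.degree_sub_lt hdegpm.symm h0 hlc
    have hrk : (q - C c * p m).natDegree ≤ k := by
      by_cases hr0 : q - C c * p m = 0
      · simp [hr0]
      · have hlt := Polynomial.natDegree_lt_natDegree hr0 hrdeg
        omega
    have hrn : (q - C c * p m).degree < (n : ℕ) := lt_trans hrdeg hq
    have hmn : m ≠ n := by
      have : (m : WithBot ℕ) < (n : ℕ) := hqdeg ▸ hq
      exact_mod_cast ne_of_lt (by exact_mod_cast this)
    have hsplit : p n * q = p n * (q - C c * p m) + c • (p n * p m) := by
      rw [smul_eq_C_mul]; ring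
    rw [hsplit, map_add, ih n _ hrk hrn, map_smul, horth n m (Ne.symm hmn), smul_zero, add_zero]

private lemma ortho_lower (L : ℝ[X] →ₗ[ℝ] ℝ) (p : ℕ → ℝ[X])
    (hm : ∀ n, (p n).Monic) (hdeg : ∀ n, (p n).natDegree = n)
    (horth : ∀ n m, n ≠ m → L (p n * p m) = 0)
    (n : ℕ) (q : ℝ[X]) (h : q.degree < (n : ℕ)) : L (p n * q) = 0 :=
  ortho_lower_aux L p hm hdeg horth q.natDegree n q le_rfl h

private lemma ortho_diag (L : ℝ[X] →ₗ[ℝ] ℝ) (p : ℕ → ℝ[X])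
    (hm : ∀ n, (p n).Monic) (hdeg : ∀ n, (p n).natDegree = n)
    (horth : ∀ n m, n ≠ m → L (p n * p m) = 0)
    (n : ℕ) (q : ℝ[X]) (hq : q.Monic) (hqd : q.natDegree = n) :
    L (p n * q) = L (p n * p n) := by
  have hdd : q.degree = (p n).degree := by
    rw [Polynomial.degree_eq_natDegree hq.ne_zero,
      Polynomial.degree_eq_natDegree (hm n).ne_zero, hqd, hdeg n]
  have hsub : (q - p n).degree < (n : ℕ) := by
    have := Polynomial.degree_sub_lt hdd hq.ne_zero (by rw [hq.leadingCoeff, (hm n).leadingCoeff])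
    rwa [Polynomial.degree_eq_natDegree hq.ne_zero, hqd] at this
  have : p n * q = p n * p n + p n * (q - p n) := by ring
  rw [this, map_add, ortho_lower L p hm hdeg horth n _ hsub, add_zero]

private lemma krall_alg (g gt dn dn1 dtn dtn1 E0 E1 : ℝ)
    (hdn : dn ≠ 0) (hdn1 : dn1 ≠ 0) (hdtn : dtn ≠ 0)
    (h0 : dtn = dn + E0) (h1 : dtn1 = dn1 + E1)
    (hg : g = dn1 / dn) (hgt : gt * dtn = dtn1) :
    gt = g * (1 + E1 / dn1) / (1 + E0 / dn) := by
  have e1 : 1 + E1 / dn1 = (dn1 + E1) / dn1 := by field_simp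
  have e0 : 1 + E0 / dn = (dn + E0) / dn := by field_simp
  have hgt' : gt = dtn1 / dtn := (eq_div_iff hdtn).mpr hgt
  rw [hgt', hg, e1, e0, ← h0, ← h1]
  field_simp

theorem krall_norm_and_gamma
    (u : ℝ[X] →ₗ[ℝ] ℝ) (un : ℕ → ℝ[X]) (d : ℕ → ℝ) (β γ : ℕ → ℝ)
    (hmonic : ∀ n, (un n).Monic) (hdeg : ∀ n, (un n).natDegree = n)
    (hd : ∀ n, d n ≠ 0)
    (horth : ∀ n m, u (un n * un m) = if n = m then d n else 0)
    -- TTRR of `u_n` with `γ_n = d_n²/d_{n-1}²`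
    (httrr0 : X * un 0 = un 1 + C (β 0) * un 0)
    (httrr : ∀ n : ℕ, X * un (n + 1) = un (n + 2) + C (β (n + 1)) * un (n + 1) +
      C (γ (n + 1)) * un n)
    (hγ : ∀ n : ℕ, γ (n + 1) = d (n + 1) / d n)
    (A B a b : ℝ) (hab : a ≠ b)
    (utn : ℕ → ℝ[X]) (dt : ℕ → ℝ) (βt γt : ℕ → ℝ)
    (htmonic : ∀ n, (utn n).Monic) (htdeg : ∀ n, (utn n).natDegree = n)
    (hdt : ∀ n, dt n ≠ 0)
    -- orthogonality with respect to `ũ = u + A δ_a + B δ_b`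
    (htorth : ∀ n m,
      u (utn n * utn m) + A * (utn n).eval a * (utn m).eval a +
        B * (utn n).eval b * (utn m).eval b = if n = m then dt n else 0)
    -- TTRR of `ũ_n`
    (htttrr0 : X * utn 0 = utn 1 + C (βt 0) * utn 0)
    (htttrr : ∀ n : ℕ, X * utn (n + 1) = utn (n + 2) + C (βt (n + 1)) * utn (n + 1) +
      C (γt (n + 1)) * utn n) :
    (∀ n : ℕ, dt n = d n + (A * (utn n).eval a * (un n).eval a +
        B * (utn n).eval b * (un n).eval b)) ∧
    (∀ n : ℕ, dt n = d n * (1 + (A * (utn n).eval a * (un n).eval a +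
        B * (utn n).eval b * (un n).eval b) / d n)) ∧
    (∀ n : ℕ, γt (n + 1) = γ (n + 1) *
        (1 + (A * (utn (n + 1)).eval a * (un (n + 1)).eval a +
          B * (utn (n + 1)).eval b * (un (n + 1)).eval b) / d (n + 1)) /
        (1 + (A * (utn n).eval a * (un n).eval a +
          B * (utn n).eval b * (un n).eval b) / d n)) := by
  set Lt : ℝ[X] →ₗ[ℝ] ℝ := u + A • Polynomial.leval a + B • Polynomial.leval b with hLt
  have hLtapp : ∀ q : ℝ[X], Lt q = u q + A * q.eval a + B * q.eval b := by
    intro q; simp [hLt, Polynomial.leval_apply]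
  have hLtorth : ∀ n m, Lt (utn n * utn m) = if n = m then dt n else 0 := by
    intro n m
    rw [hLtapp, ← htorth n m]
    simp [Polynomial.eval_mul]; ring
  have hLtoff : ∀ n m, n ≠ m → Lt (utn n * utn m) = 0 := by
    intro n m h; rw [hLtorth, if_neg h]
  have huoff : ∀ n m, n ≠ m → u (un n * un m) = 0 := by
    intro n m h; rw [horth, if_neg h]
  -- part 1
  have part1 : ∀ n : ℕ, dt n = d n + (A * (utn n).eval a * (un n).eval a +
      B * (utn n).eval b * (un n).eval b) := by
    intro n
    have h1 : Lt (utn n * un n) = dt n := by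
      rw [ortho_diag Lt utn htmonic htdeg hLtoff n (un n) (hmonic n) (hdeg n),
        hLtorth, if_pos rfl]
    have h2 : u (un n * utn n) = d n := by
      rw [ortho_diag u un hmonic hdeg huoff n (utn n) (htmonic n) (htdeg n),
        horth, if_pos rfl]
    rw [hLtapp] at h1
    rw [mul_comm] at h2
    rw [← h1, h2]
    simp [Polynomial.eval_mul]; ring
  -- nonvanishing of 1 + Δ_n
  have hΔ : ∀ n : ℕ, (1 + (A * (utn n).eval a * (un n).eval a +
      B * (utn n).eval b * (un n).eval b) / d n) ≠ 0 := by
    intro n h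
    apply hdt n
    rw [part1 n]
    have := hd n
    field_simp at h
    linarith [h]
  have part2 : ∀ n : ℕ, dt n = d n * (1 + (A * (utn n).eval a * (un n).eval a +
      B * (utn n).eval b * (un n).eval b) / d n) := by
    intro n
    rw [part1 n]
    field_simp [hd n]
  refine ⟨part1, part2, ?_⟩
  -- γt (n+1) * dt n = dt (n+1)
  have hgt : ∀ n : ℕ, γt (n + 1) * dt n = dt (n + 1) := by
    intro n
    have e1 : Lt (utn n * (X * utn (n + 1))) = γt (n + 1) * dt n := by
      have hsplit : utn n * (X * utn (n + 1)) =
          utn n * utn (n + 2) + βt (n + 1) • (utn n * utn (n + 1)) +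
          γt (n + 1) • (utn n * utn n) := by
        rw [htttrr n, smul_eq_C_mul, smul_eq_C_mul]; ring
      rw [hsplit, map_add, map_add, map_smul, map_smul,
        hLtoff n (n + 2) (by omega), hLtoff n (n + 1) (by omega),
        hLtorth n n, if_pos rfl]
      simp [smul_eq_mul]
    have e2 : Lt (utn n * (X * utn (n + 1))) = dt (n + 1) := by
      have hcomm : utn n * (X * utn (n + 1)) = (X * utn n) * utn (n + 1) := by ring
      rw [hcomm]
      cases n with
      | zero =>
        have hsplit : (X * utn 0) * utn 1 =
            utn 1 * utn 1 + βt 0 • (utn 0 * utn 1) := by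
          rw [htttrr0, smul_eq_C_mul]; ring
        rw [hsplit, map_add, map_smul, hLtorth 1 1, if_pos rfl,
          hLtoff 0 1 (by omega)]
        simp
      | succ m =>
        have hsplit : (X * utn (m + 1)) * utn (m + 2) =
            utn (m + 2) * utn (m + 2) + βt (m + 1) • (utn (m + 1) * utn (m + 2)) +
            γt (m + 1) • (utn m * utn (m + 2)) := by
          rw [htttrr m, smul_eq_C_mul, smul_eq_C_mul]; ring
        rw [hsplit, map_add, map_add, map_smul, map_smul, hLtorth (m + 2) (m + 2),
          if_pos rfl, hLtoff (m + 1) (m + 2) (by omega), hLtoff m (m + 2) (by omega)]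
        simp
    rw [← e1, e2]
  intro n
  exact krall_alg (γ (n + 1)) (γt (n + 1)) (d n) (d (n + 1)) (dt n) (dt (n + 1)) _ _
    (hd n) (hd (n + 1)) (hdt n) (part1 n) (part1 (n + 1)) (hγ n) (hgt n)
end
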